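/- arXiv:2604.12797 — 3 statements merged into one kernel-verified Lean document; each statement's English description precedes it below -/
import Mathlib

section
/- Lemma 5.4 (commutator bound): Let φ : [0,∞) → ℝ be Lipschitz with Lipschitz constant C_φ, and let Δ be a finite signed Borel measure on [0,∞) whose total variation satisfies |Δ|([0,∞)) ≤ 2. For ε > 0 define the commutator c^{φ,ε}(x) := ∫₀^∞ φ(y) G_ε(x,y) dΔ(y) − φ(x) ∫₀^∞ G_ε(x,y) dΔ(y). Then there exists a constant C > 0, depending only on C_φ, such that ∫₀^∞ c^{φ,ε}(x)² dx ≤ C√ε for all ε > 0. -/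
open MeasureTheory Set Filter Topology

/-- The Gaussian kernel `p_ε(x) = (2πε)^{-1/2} exp(-x²/(2ε))`. -/
noncomputable def pker (ε x : ℝ) : ℝ :=
  (Real.sqrt (2 * Real.pi * ε))⁻¹ * Real.exp (-(x ^ 2) / (2 * ε))

/-- The Dirichlet heat kernel on the half-line `G_ε(x,y) = p_ε(x-y) - p_ε(x+y)`. -/
noncomputable def Gker (ε x y : ℝ) : ℝ := pker ε (x - y) - pker ε (x + y)

/-! For `x, y ≥ 0`, the Lipschitz bound and `|x - y| ≤ x + y` give
`|φ y - φ x| |G_ε(x,y)| ≤ C_φ k_ε(x,y)` with `k_ε(x,y) = |x-y| p_ε(x-y) + |x+y| p_ε(x+y)`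
(after extending `φ` to a Lipschitz function on `ℝ`), so `|c^{φ,ε}(x)| ≤ C_φ ∫ k_ε(x,y) d|Δ|(y)`.
Cauchy–Schwarz against the finite measure `|Δ|` and Tonelli reduce the claim to
`∫ k_ε(x,y)² dx ≤ 8√ε`, which follows from `u² p_ε(u)² ≤ 2ε (2πε)^{-1/2} p_ε(u)` since
`p_ε(· ∓ y)` are probability densities. -/

open scoped ENNReal NNReal
open Real ProbabilityTheory

lemma ae_nonneg_of_measure_Iio_zero {μ : Measure ℝ} (hμ : μ (Iio 0) = 0) : ∀ᵐ y ∂μ, 0 ≤ y :=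
  ae_iff.2 (by simp only [not_le]; exact hμ)

lemma sq_lintegral_le_measure_univ_mul {α : Type*} [MeasurableSpace α] (μ : Measure α)
    {f : α → ℝ≥0∞} (hf : AEMeasurable f μ) :
    (∫⁻ x, f x ∂μ) ^ 2 ≤ μ univ * ∫⁻ x, f x ^ 2 ∂μ := by
  have h := ENNReal.lintegral_mul_le_Lp_mul_Lq μ .two_two hf (aemeasurable_const (b := 1))
  simp only [Pi.mul_apply, mul_one, ENNReal.one_rpow, lintegral_const, one_mul] at h
  calc (∫⁻ x, f x ∂μ) ^ 2
      ≤ ((∫⁻ x, f x ^ (2 : ℝ) ∂μ) ^ (1 / 2 : ℝ) * μ univ ^ (1 / 2 : ℝ)) ^ 2 := by gcongr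
    _ = μ univ * ∫⁻ x, f x ^ 2 ∂μ := by
        simp only [mul_pow, ← ENNReal.rpow_natCast, ← ENNReal.rpow_mul]
        norm_num [mul_comm]

lemma integral_le_toReal_of_lintegral_enorm_le {α : Type*} [MeasurableSpace α] {μ : Measure α}
    {f : α → ℝ} {B : ℝ≥0∞} (hB : B ≠ ∞) (h : ∫⁻ x, ‖f x‖ₑ ∂μ ≤ B) :
    ∫ x, f x ∂μ ≤ B.toReal :=
  (le_abs_self _).trans <| (toReal_enorm _).symm.trans_le <|
    ENNReal.toReal_mono hB ((enorm_integral_le_lintegral_enorm f).trans h)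

section GaussianKernel

variable {ε : ℝ}

lemma pker_sub_eq_gaussianPDFReal (hε : 0 ≤ ε) (x y : ℝ) :
    pker ε (x - y) = gaussianPDFReal y ε.toNNReal x := by
  simp [pker, gaussianPDFReal, Real.coe_toNNReal _ hε]

lemma pker_pos (hε : 0 < ε) (u : ℝ) : 0 < pker ε u := by
  unfold pker; positivity

@[fun_prop]
lemma continuous_pker (ε : ℝ) : Continuous (pker ε) := by
  unfold pker; fun_prop

lemma pker_le (hε : 0 < ε) (u : ℝ) : pker ε u ≤ (√(2 * π * ε))⁻¹ := by
  have : -(u ^ 2) / (2 * ε) ≤ 0 := div_nonpos_of_nonpos_of_nonneg (by nlinarith) (by positivity)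
  exact mul_le_of_le_one_right (by positivity) (exp_le_one_iff.2 this)

lemma lintegral_ofReal_pker_sub (hε : 0 < ε) (y : ℝ) :
    ∫⁻ x, ENNReal.ofReal (pker ε (x - y)) = 1 := by
  simp_rw [pker_sub_eq_gaussianPDFReal hε.le]
  exact lintegral_gaussianPDFReal_eq_one y (by simpa using hε)

lemma lintegral_ofReal_pker_add (hε : 0 < ε) (y : ℝ) :
    ∫⁻ x, ENNReal.ofReal (pker ε (x + y)) = 1 := by
  simpa using lintegral_ofReal_pker_sub hε (-y)

lemma sq_mul_pker_sq_le (hε : 0 < ε) (u : ℝ) :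
    u ^ 2 * pker ε u ^ 2 ≤ 2 * ε * (√(2 * π * ε))⁻¹ * pker ε u := by
  set E := exp (-(u ^ 2) / (2 * ε))
  -- `u² E = 2ε · t e^{-t}` with `t = u² / (2ε)`, and `t e^{-t} ≤ e^{-1} ≤ 1`.
  have hE : u ^ 2 * E ≤ 2 * ε := by
    have h := (mul_exp_neg_le_exp_neg_one (u ^ 2 / (2 * ε))).trans (exp_le_one_iff.2 (by norm_num))
    have : u ^ 2 * E = 2 * ε * (u ^ 2 / (2 * ε) * exp (-(u ^ 2 / (2 * ε)))) := by
      simp only [E, neg_div]; field_simp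
    rw [this]; nlinarith
  have hA : 0 ≤ (√(2 * π * ε))⁻¹ ^ 2 * E := by positivity
  calc u ^ 2 * pker ε u ^ 2 = (u ^ 2 * E) * ((√(2 * π * ε))⁻¹ ^ 2 * E) := by unfold pker; ring
    _ ≤ 2 * ε * ((√(2 * π * ε))⁻¹ ^ 2 * E) := mul_le_mul_of_nonneg_right hE hA
    _ = 2 * ε * (√(2 * π * ε))⁻¹ * pker ε u := by unfold pker; ring

lemma abs_mul_pker_le_one (hε : 0 < ε) (u : ℝ) : |u| * pker ε u ≤ 1 := by
  have hA : (√(2 * π * ε))⁻¹ ^ 2 = (2 * π * ε)⁻¹ := by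
    rw [inv_pow, sq_sqrt (by positivity)]
  have h : (|u| * pker ε u) ^ 2 ≤ 1 := calc
    (|u| * pker ε u) ^ 2 = u ^ 2 * pker ε u ^ 2 := by rw [mul_pow, sq_abs]
    _ ≤ 2 * ε * (√(2 * π * ε))⁻¹ * (√(2 * π * ε))⁻¹ := by
      refine (sq_mul_pker_sq_le hε u).trans ?_
      gcongr
      exact pker_le hε u
    _ = π⁻¹ := by rw [mul_assoc, ← sq, hA]; field_simp
    _ ≤ 1 := inv_le_one_of_one_le₀ (by linarith [pi_gt_three])
  exact (pow_le_one_iff_of_nonneg (mul_nonneg (abs_nonneg u) (pker_pos hε u).le) two_ne_zero).1 h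

lemma mul_inv_sqrt_two_pi_mul_le (hε : 0 < ε) : ε * (√(2 * π * ε))⁻¹ ≤ √ε := by
  have h : √ε ≤ √(2 * π * ε) := sqrt_le_sqrt (by nlinarith [pi_gt_three])
  calc ε * (√(2 * π * ε))⁻¹ ≤ ε * (√ε)⁻¹ := by gcongr
    _ = √ε := by rw [← div_eq_mul_inv, div_sqrt]

end GaussianKernel

section Majorant

variable {ε : ℝ}

noncomputable def majorantKer (ε x y : ℝ) : ℝ :=
  |x - y| * pker ε (x - y) + |x + y| * pker ε (x + y)

lemma majorantKer_nonneg (hε : 0 < ε) (x y : ℝ) : 0 ≤ majorantKer ε x y :=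
  add_nonneg (mul_nonneg (abs_nonneg _) (pker_pos hε _).le)
    (mul_nonneg (abs_nonneg _) (pker_pos hε _).le)

lemma majorantKer_le_two (hε : 0 < ε) (x y : ℝ) : majorantKer ε x y ≤ 2 := by
  unfold majorantKer
  linarith [abs_mul_pker_le_one hε (x - y), abs_mul_pker_le_one hε (x + y)]

lemma continuous_majorantKer (ε : ℝ) : Continuous (Function.uncurry (majorantKer ε)) := by
  unfold majorantKer; fun_prop

lemma abs_Gker_le (hε : 0 < ε) (x y : ℝ) :
    |Gker ε x y| ≤ pker ε (x - y) + pker ε (x + y) :=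
  (abs_sub _ _).trans_eq <| by rw [abs_of_pos (pker_pos hε _), abs_of_pos (pker_pos hε _)]

lemma abs_sub_mul_abs_Gker_le_majorantKer (hε : 0 < ε) {x y : ℝ} (hx : 0 ≤ x) (hy : 0 ≤ y) :
    |x - y| * |Gker ε x y| ≤ majorantKer ε x y := by
  have hxy : |x - y| ≤ |x + y| := by
    rw [abs_of_nonneg (add_nonneg hx hy)]
    exact abs_le.2 ⟨by linarith, by linarith⟩
  calc |x - y| * |Gker ε x y| ≤ |x - y| * (pker ε (x - y) + pker ε (x + y)) := by
        gcongr
        exact abs_Gker_le hε x y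
    _ ≤ majorantKer ε x y := by
        unfold majorantKer
        have := mul_le_mul_of_nonneg_right hxy (pker_pos hε (x + y)).le
        linarith

lemma lintegral_ofReal_majorantKer_sq_le (hε : 0 < ε) (y : ℝ) :
    ∫⁻ x, ENNReal.ofReal (majorantKer ε x y) ^ 2 ≤ ENNReal.ofReal (8 * √ε) := by
  set c := 2 * ε * (√(2 * π * ε))⁻¹
  have hc : 0 ≤ c := by positivity
  have hpoint : ∀ x, majorantKer ε x y ^ 2 ≤ 2 * c * (pker ε (x - y) + pker ε (x + y)) := by
    intro x
    have h₁ := sq_mul_pker_sq_le hε (x - y)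
    have h₂ := sq_mul_pker_sq_le hε (x + y)
    have : majorantKer ε x y ^ 2 ≤ 2 * ((x - y) ^ 2 * pker ε (x - y) ^ 2
        + (x + y) ^ 2 * pker ε (x + y) ^ 2) := by
      unfold majorantKer
      simp only [← sq_abs (x - y), ← sq_abs (x + y), ← mul_pow]
      exact add_sq_le
    linarith
  calc ∫⁻ x, ENNReal.ofReal (majorantKer ε x y) ^ 2
      ≤ ∫⁻ x, ENNReal.ofReal (2 * c) *
          (ENNReal.ofReal (pker ε (x - y)) + ENNReal.ofReal (pker ε (x + y))) := by
        refine lintegral_mono fun x => ?_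
        rw [← ENNReal.ofReal_pow (majorantKer_nonneg hε x y),
          ← ENNReal.ofReal_add (pker_pos hε _).le (pker_pos hε _).le,
          ← ENNReal.ofReal_mul (by positivity)]
        exact ENNReal.ofReal_le_ofReal (hpoint x)
    _ = ENNReal.ofReal (2 * c) * 2 := by
        rw [lintegral_const_mul _ (by fun_prop), lintegral_add_left (by fun_prop),
          lintegral_ofReal_pker_sub hε, lintegral_ofReal_pker_add hε, one_add_one_eq_two]
    _ ≤ ENNReal.ofReal (8 * √ε) := by
        rw [← ENNReal.ofReal_ofNat 2, ← ENNReal.ofReal_mul (by positivity)]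
        exact ENNReal.ofReal_le_ofReal (by linarith [mul_inv_sqrt_two_pi_mul_le hε])

end Majorant

/-- The commutator `c^{φ,ε}` of the paper, for the signed measure `Δ = μp - μn`. -/
noncomputable def heatCommutator (ε : ℝ) (φ : ℝ → ℝ) (μp μn : Measure ℝ) (x : ℝ) : ℝ :=
  (∫ y, φ y * Gker ε x y ∂μp) - (∫ y, φ y * Gker ε x y ∂μn)
    - φ x * ((∫ y, Gker ε x y ∂μp) - (∫ y, Gker ε x y ∂μn))

section Commutator

variable {ε : ℝ} {K : ℝ≥0} {ψ : ℝ → ℝ} {μ μp μn : Measure ℝ}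

lemma heatCommutator_congr {φ : ℝ → ℝ} (hφψ : EqOn φ ψ (Ici 0)) (hp : μp (Iio 0) = 0)
    (hn : μn (Iio 0) = 0) {x : ℝ} (hx : 0 ≤ x) :
    heatCommutator ε φ μp μn x = heatCommutator ε ψ μp μn x := by
  have h : ∀ {μ : Measure ℝ}, μ (Iio 0) = 0 →
      ∫ y, φ y * Gker ε x y ∂μ = ∫ y, ψ y * Gker ε x y ∂μ := fun hμ =>
    integral_congr_ae <| (ae_nonneg_of_measure_Iio_zero hμ).mono fun y hy => by
      simp only [hφψ (mem_Ici.2 hy)]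
  simp only [heatCommutator, h hp, h hn, hφψ (mem_Ici.2 hx)]

lemma enorm_integral_mul_Gker_sub_le [IsFiniteMeasure μ] (hψ : LipschitzWith K ψ)
    (hμ : μ (Iio 0) = 0) (hε : 0 < ε) {x : ℝ} (hx : 0 ≤ x) :
    ‖(∫ y, ψ y * Gker ε x y ∂μ) - ψ x * ∫ y, Gker ε x y ∂μ‖ₑ
      ≤ K * ∫⁻ y, ENNReal.ofReal (majorantKer ε x y) ∂μ := by
  have hG : Continuous (Gker ε x) := by unfold Gker; fun_prop
  have hbound : ∀ᵐ y ∂μ, ‖(ψ y - ψ x) * Gker ε x y‖ ≤ K * majorantKer ε x y := by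
    filter_upwards [ae_nonneg_of_measure_Iio_zero hμ] with y hy
    rw [Real.norm_eq_abs, abs_mul]
    calc |ψ y - ψ x| * |Gker ε x y| ≤ K * |x - y| * |Gker ε x y| := by
          gcongr
          simpa [Real.dist_eq, abs_sub_comm] using hψ.dist_le_mul y x
      _ ≤ K * majorantKer ε x y := by
          rw [mul_assoc]; gcongr; exact abs_sub_mul_abs_Gker_le_majorantKer hε hx hy
  have hGint : Integrable (Gker ε x) μ := by
    refine Integrable.mono' (integrable_const (2 * (√(2 * π * ε))⁻¹)) hG.aestronglyMeasurable
      (ae_of_all _ fun y => ?_)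
    rw [Real.norm_eq_abs]
    linarith [abs_Gker_le hε x y, pker_le hε (x - y), pker_le hε (x + y)]
  have hdiff : Integrable (fun y => (ψ y - ψ x) * Gker ε x y) μ :=
    Integrable.mono' (integrable_const ((K : ℝ) * 2))
      ((hψ.continuous.sub continuous_const).mul hG).aestronglyMeasurable <| hbound.mono fun y hy =>
      hy.trans (by gcongr; exact majorantKer_le_two hε x y)
  have hsplit : (∫ y, ψ y * Gker ε x y ∂μ) - ψ x * ∫ y, Gker ε x y ∂μ
      = ∫ y, (ψ y - ψ x) * Gker ε x y ∂μ := by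
    have hψG : Integrable (fun y => ψ y * Gker ε x y) μ :=
      (hdiff.add (hGint.const_mul (ψ x))).congr <| ae_of_all _ fun y => by
        simp only [Pi.add_apply]; ring
    rw [← integral_const_mul, ← integral_sub hψG (hGint.const_mul _)]
    exact integral_congr_ae (ae_of_all _ fun y => by ring)
  calc _ = ‖∫ y, (ψ y - ψ x) * Gker ε x y ∂μ‖ₑ := by rw [hsplit]
    _ ≤ ∫⁻ y, ‖(ψ y - ψ x) * Gker ε x y‖ₑ ∂μ := enorm_integral_le_lintegral_enorm _
    _ ≤ ∫⁻ y, K * ENNReal.ofReal (majorantKer ε x y) ∂μ := by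
        refine lintegral_mono_ae (hbound.mono fun y hy => ?_)
        rw [← ofReal_norm, ← ENNReal.ofReal_coe_nnreal, ← ENNReal.ofReal_mul K.coe_nonneg]
        exact ENNReal.ofReal_le_ofReal hy
    _ = K * ∫⁻ y, ENNReal.ofReal (majorantKer ε x y) ∂μ :=
        lintegral_const_mul' _ _ ENNReal.coe_ne_top

lemma enorm_heatCommutator_le [IsFiniteMeasure μp] [IsFiniteMeasure μn] (hψ : LipschitzWith K ψ)
    (hp : μp (Iio 0) = 0) (hn : μn (Iio 0) = 0) (hε : 0 < ε) {x : ℝ} (hx : 0 ≤ x) :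
    ‖heatCommutator ε ψ μp μn x‖ₑ
      ≤ K * ∫⁻ y, ENNReal.ofReal (majorantKer ε x y) ∂(μp + μn) := by
  have h : heatCommutator ε ψ μp μn x
      = ((∫ y, ψ y * Gker ε x y ∂μp) - ψ x * ∫ y, Gker ε x y ∂μp)
        - ((∫ y, ψ y * Gker ε x y ∂μn) - ψ x * ∫ y, Gker ε x y ∂μn) := by
    unfold heatCommutator; ring
  rw [h, lintegral_add_measure, mul_add]
  exact (enorm_sub_le ..).trans (add_le_add
    (enorm_integral_mul_Gker_sub_le hψ hp hε hx) (enorm_integral_mul_Gker_sub_le hψ hn hε hx))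

lemma setLIntegral_enorm_heatCommutator_sq_le [IsFiniteMeasure μp] [IsFiniteMeasure μn]
    (hψ : LipschitzWith K ψ) (hp : μp (Iio 0) = 0) (hn : μn (Iio 0) = 0) (hε : 0 < ε) :
    ∫⁻ x in Ioi 0, ‖heatCommutator ε ψ μp μn x‖ₑ ^ 2
      ≤ K ^ 2 * (μp + μn) univ ^ 2 * ENNReal.ofReal (8 * √ε) := by
  set ν := μp + μn
  set k : ℝ → ℝ → ℝ≥0∞ := fun x y => ENNReal.ofReal (majorantKer ε x y)
  have hk : Measurable (Function.uncurry k) :=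
    ENNReal.measurable_ofReal.comp (continuous_majorantKer ε).measurable
  have hpoint : ∀ x ∈ Ioi (0 : ℝ), ‖heatCommutator ε ψ μp μn x‖ₑ ^ 2
      ≤ K ^ 2 * (ν univ * ∫⁻ y, k x y ^ 2 ∂ν) := fun x hx => calc
    ‖heatCommutator ε ψ μp μn x‖ₑ ^ 2 ≤ (K * ∫⁻ y, k x y ∂ν) ^ 2 := by
      gcongr; exact enorm_heatCommutator_le hψ hp hn hε (le_of_lt hx)
    _ ≤ K ^ 2 * (ν univ * ∫⁻ y, k x y ^ 2 ∂ν) := by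
      rw [mul_pow]
      gcongr
      exact sq_lintegral_le_measure_univ_mul ν (hk.comp measurable_prodMk_left).aemeasurable
  calc ∫⁻ x in Ioi 0, ‖heatCommutator ε ψ μp μn x‖ₑ ^ 2
      ≤ ∫⁻ x, K ^ 2 * (ν univ * ∫⁻ y, k x y ^ 2 ∂ν) :=
        (setLIntegral_mono' measurableSet_Ioi hpoint).trans (setLIntegral_le_lintegral _ _)
    _ = K ^ 2 * (ν univ * ∫⁻ y, (∫⁻ x, k x y ^ 2) ∂ν) := by
        rw [lintegral_const_mul' _ _ (by simp), lintegral_const_mul' _ _ (measure_ne_top ν univ),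
          lintegral_lintegral_swap (hk.pow_const 2).aemeasurable]
    _ ≤ K ^ 2 * (ν univ * ∫⁻ _, ENNReal.ofReal (8 * √ε) ∂ν) := by
        gcongr with y
        exact lintegral_ofReal_majorantKer_sq_le hε y
    _ = K ^ 2 * ν univ ^ 2 * ENNReal.ofReal (8 * √ε) := by
        rw [lintegral_const]; ring

end Commutator

theorem commutator_bound_general (Cφ : ℝ) :
    ∃ C > (0 : ℝ), ∀ φ : ℝ → ℝ, LipschitzOnWith (Real.toNNReal Cφ) φ (Ici 0) →
      ∀ μp μn : Measure ℝ, IsFiniteMeasure μp → IsFiniteMeasure μn →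
        μp (Iio 0) = 0 → μn (Iio 0) = 0 →
        μp univ + μn univ ≤ 2 →
        ∀ ε > (0 : ℝ),
          (∫ x in Ioi (0 : ℝ),
            ((∫ y, φ y * Gker ε x y ∂μp) - (∫ y, φ y * Gker ε x y ∂μn)
              - φ x * ((∫ y, Gker ε x y ∂μp) - (∫ y, Gker ε x y ∂μn))) ^ 2)
          ≤ C * Real.sqrt ε := by
  set K := Real.toNNReal Cφ
  refine ⟨32 * K ^ 2 + 1, by positivity, fun φ hφ μp μn _ _ hp hn hmass ε hε => ?_⟩
  obtain ⟨ψ, hψ, hφψ⟩ := hφ.extend_real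
  have hmass' : ((μp + μn) univ).toReal ≤ 2 :=
    ENNReal.toReal_le_of_le_ofReal zero_le_two (by simpa using hmass)
  have hbound := setLIntegral_enorm_heatCommutator_sq_le hψ hp hn hε
  calc ∫ x in Ioi 0, heatCommutator ε φ μp μn x ^ 2
      = ∫ x in Ioi 0, heatCommutator ε ψ μp μn x ^ 2 :=
        setIntegral_congr_fun measurableSet_Ioi fun x hx => by
          rw [heatCommutator_congr hφψ hp hn (le_of_lt hx)]
    _ ≤ (K ^ 2 * (μp + μn) univ ^ 2 * ENNReal.ofReal (8 * √ε)).toReal :=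
        integral_le_toReal_of_lintegral_enorm_le (by simp [ENNReal.mul_eq_top])
          (by simpa only [enorm_pow] using hbound)
    _ = K ^ 2 * ((μp + μn) univ).toReal ^ 2 * (8 * √ε) := by
        simp [ENNReal.toReal_mul, ENNReal.toReal_pow, Real.sqrt_nonneg]
    _ ≤ K ^ 2 * 2 ^ 2 * (8 * √ε) := by gcongr
    _ ≤ (32 * K ^ 2 + 1) * √ε := by nlinarith [Real.sqrt_nonneg ε]

/-- Lemma 5.4 (commutator bound): for `φ : [0,∞) → ℝ` Lipschitz with constant
`C_φ` there is a constant `C > 0`, depending only on `C_φ`, such that for every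
finite signed Borel measure `Δ = μp - μn` on `[0,∞)` with total variation at most
`2`, the commutator
`c^{φ,ε}(x) = ∫₀^∞ φ(y) G_ε(x,y) dΔ(y) - φ(x) ∫₀^∞ G_ε(x,y) dΔ(y)`
satisfies `∫₀^∞ c^{φ,ε}(x)² dx ≤ C √ε` for all `ε > 0`. -/
theorem commutator_bound (Cφ : ℝ) (hCφ : 0 ≤ Cφ) :
    ∃ C > (0 : ℝ), ∀ φ : ℝ → ℝ, LipschitzOnWith (Real.toNNReal Cφ) φ (Ici 0) →
      ∀ μp μn : Measure ℝ, IsFiniteMeasure μp → IsFiniteMeasure μn →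
        μp (Iio 0) = 0 → μn (Iio 0) = 0 →
        μp univ + μn univ ≤ 2 →
        ∀ ε > (0 : ℝ),
          (∫ x in Ioi (0 : ℝ),
            ((∫ y, φ y * Gker ε x y ∂μp) - (∫ y, φ y * Gker ε x y ∂μn)
              - φ x * ((∫ y, Gker ε x y ∂μp) - (∫ y, Gker ε x y ∂μn))) ^ 2)
          ≤ C * Real.sqrt ε :=
  commutator_bound_general Cφ
end

section
/- Lemma 5.6 (boundary term, quantitative core): For all y > 0 and all ε > 0, |∫₀^∞ p_ε(x) (∫_x^∞ G_ε(z,y) dz) dx − 1/2| ≤ 3 e^{−y²/(16ε)}. In particular, for every y > 0, ∫₀^∞ p_ε(x) (∫_x^∞ G_ε(z,y) dz) dx → 1/2 as ε ↓ 0. -/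
open MeasureTheory Set Filter Topology

/-!
Write `Q_ε(a) = ∫_a^∞ p_ε`. By translation and symmetry of `p_ε`,
`∫_x^∞ G_ε(z,y) dz = 1 - (Q_ε(y - x) + Q_ε(x + y))`, and `∫₀^∞ p_ε = 1/2`, so the error
is `∫₀^∞ p_ε(x) (Q_ε(y - x) + Q_ε(x + y)) dx`. For `0 ≤ x ≤ y/2` both tails are at most
`Q_ε(y/2) ≤ e^{-y²/(8ε)}/2`, while for `x > y/2` the weight `p_ε` itself has mass `Q_ε(y/2)`.
Hence the error is at most `e^{-y²/(8ε)} ≤ 3 e^{-y²/(16ε)}`.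
-/

open ProbabilityTheory

lemma integral_mul_le_of_le_off {α : Type*} [MeasurableSpace α] {μ : Measure α}
    {f g : α → ℝ} {t : Set α} {δ : ℝ} (hf : Integrable f μ) (hf0 : ∀ᵐ x ∂μ, 0 ≤ f x)
    (hg : AEStronglyMeasurable g μ) (hg0 : ∀ᵐ x ∂μ, 0 ≤ g x) (hg1 : ∀ᵐ x ∂μ, g x ≤ 1)
    (hgδ : ∀ᵐ x ∂μ, x ∉ t → g x ≤ δ) (ht : MeasurableSet t) (hδ : 0 ≤ δ) :
    ∫ x, f x * g x ∂μ ≤ δ * ∫ x, f x ∂μ + ∫ x in t, f x ∂μ := by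
  rw [← integral_const_mul, ← integral_indicator ht,
    ← integral_add (hf.const_mul δ) (hf.indicator ht)]
  refine integral_mono_ae (hf.mul_bdd hg (c := 1) ?_)
    ((hf.const_mul δ).add (hf.indicator ht)) ?_
  · filter_upwards [hg0, hg1] with x h0 h1
    rwa [Real.norm_eq_abs, abs_of_nonneg h0]
  · filter_upwards [hf0, hg0, hg1, hgδ] with x hfx h0 h1 hδx
    by_cases hx : x ∈ t
    · simp only [indicator_of_mem hx]
      nlinarith
    · simp only [indicator_of_notMem hx]
      nlinarith [hδx hx]

lemma tendsto_exp_neg_div_mul_nhdsGT_zero {a b : ℝ} (ha : 0 < a) (hb : 0 < b) :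
    Tendsto (fun ε => Real.exp (-a / (b * ε))) (𝓝[>] 0) (𝓝 0) := by
  have h : Tendsto (fun ε : ℝ => -a / b * ε⁻¹) (𝓝[>] 0) atBot :=
    tendsto_inv_nhdsGT_zero.const_mul_atTop_of_neg (div_neg_of_neg_of_pos (neg_neg_of_pos ha) hb)
  refine (Real.tendsto_exp_atBot.comp h).congr fun ε => ?_
  simp only [Function.comp_apply]
  congr 1
  ring

lemma pker_eq_gaussianPDFReal {ε : ℝ} (hε : 0 ≤ ε) : pker ε = gaussianPDFReal 0 ε.toNNReal := by
  funext x
  simp [pker, gaussianPDFReal, Real.coe_toNNReal _ hε]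

lemma pker_nonneg (ε x : ℝ) : 0 ≤ pker ε x := by
  unfold pker
  positivity

lemma pker_neg (ε x : ℝ) : pker ε (-x) = pker ε x := by
  simp [pker]

lemma integrable_pker {ε : ℝ} (hε : 0 ≤ ε) : Integrable (pker ε) := by
  rw [pker_eq_gaussianPDFReal hε]
  exact integrable_gaussianPDFReal 0 _

lemma integral_pker {ε : ℝ} (hε : 0 < ε) : ∫ x, pker ε x = 1 := by
  rw [pker_eq_gaussianPDFReal hε.le]
  exact integral_gaussianPDFReal_eq_one 0 (by simpa using hε)

-- `x² ≥ a² + (x - a)²` when `0 ≤ a ≤ x`.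
lemma pker_le_exp_mul_pker_sub {ε a x : ℝ} (hε : 0 ≤ ε) (ha : 0 ≤ a) (hax : a ≤ x) :
    pker ε x ≤ Real.exp (-(a ^ 2) / (2 * ε)) * pker ε (x - a) := by
  have hexponent : -(x ^ 2) / (2 * ε) ≤ -(a ^ 2) / (2 * ε) + -((x - a) ^ 2) / (2 * ε) := by
    rw [← add_div]
    exact div_le_div_of_nonneg_right (by nlinarith) (by positivity)
  calc pker ε x ≤ (Real.sqrt (2 * Real.pi * ε))⁻¹ *
        Real.exp (-(a ^ 2) / (2 * ε) + -((x - a) ^ 2) / (2 * ε)) := by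
        unfold pker; gcongr
    _ = Real.exp (-(a ^ 2) / (2 * ε)) * pker ε (x - a) := by rw [Real.exp_add, pker]; ring

noncomputable def pkerTail (ε a : ℝ) : ℝ := ∫ x in Ici a, pker ε x

lemma setIntegral_Ioi_pker (ε a : ℝ) : ∫ x in Ioi a, pker ε x = pkerTail ε a :=
  integral_Ici_eq_integral_Ioi.symm

lemma pkerTail_nonneg (ε a : ℝ) : 0 ≤ pkerTail ε a :=
  setIntegral_nonneg measurableSet_Ici fun x _ => pker_nonneg ε x

lemma pkerTail_antitone {ε : ℝ} (hε : 0 ≤ ε) : Antitone (pkerTail ε) := fun _ _ hab =>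
  setIntegral_mono_set (integrable_pker hε).integrableOn
    (Eventually.of_forall (pker_nonneg ε)) (Ici_subset_Ici.2 hab).eventuallyLE

lemma pkerTail_neg {ε : ℝ} (hε : 0 < ε) (a : ℝ) : pkerTail ε (-a) = 1 - pkerTail ε a := by
  have hIic : pkerTail ε (-a) = ∫ x in Iic a, pker ε x := by
    rw [pkerTail, integral_Ici_eq_integral_Ioi, ← neg_neg a, ← integral_comp_neg_Iic, neg_neg]
    simp only [pker_neg]
  rw [hIic, pkerTail, integral_Ici_eq_integral_Ioi, ← compl_Iic, ← integral_pker hε,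
    ← integral_add_compl measurableSet_Iic (integrable_pker hε.le)]
  ring

lemma pkerTail_zero {ε : ℝ} (hε : 0 < ε) : pkerTail ε 0 = 1 / 2 := by
  linarith [neg_zero (G := ℝ) ▸ pkerTail_neg hε 0]

lemma integral_Ici_pker_sub (ε a b : ℝ) :
    ∫ z in Ici a, pker ε (z - b) = pkerTail ε (a - b) := by
  rw [pkerTail, ← (measurePreserving_sub_right volume b).setIntegral_preimage_emb
    (measurableEmbedding_subRight b) (pker ε) (Ici (a - b)), preimage_sub_const_Ici,
    sub_add_cancel]

lemma integral_Ici_pker_add (ε a b : ℝ) :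
    ∫ z in Ici a, pker ε (z + b) = pkerTail ε (a + b) := by
  simpa using integral_Ici_pker_sub ε a (-b)

lemma pkerTail_le_exp {ε a : ℝ} (hε : 0 < ε) (ha : 0 ≤ a) :
    pkerTail ε a ≤ Real.exp (-(a ^ 2) / (2 * ε)) / 2 := by
  calc pkerTail ε a ≤ ∫ x in Ici a, Real.exp (-(a ^ 2) / (2 * ε)) * pker ε (x - a) :=
        setIntegral_mono_on (integrable_pker hε.le).integrableOn
          (((integrable_pker hε.le).comp_sub_right a).const_mul _).integrableOn
          measurableSet_Ici fun x hx => pker_le_exp_mul_pker_sub hε.le ha hx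
    _ = Real.exp (-(a ^ 2) / (2 * ε)) / 2 := by
        rw [integral_const_mul, integral_Ici_pker_sub, sub_self, pkerTail_zero hε]
        ring

lemma pkerTail_half_le {ε y : ℝ} (hε : 0 < ε) (hy : 0 ≤ y) :
    pkerTail ε (y / 2) ≤ Real.exp (-(y ^ 2) / (8 * ε)) / 2 := by
  convert pkerTail_le_exp hε (by linarith : 0 ≤ y / 2) using 3
  ring

noncomputable def boundaryDefect (ε y x : ℝ) : ℝ := pkerTail ε (y - x) + pkerTail ε (x + y)

lemma integral_Ici_Gker {ε : ℝ} (hε : 0 < ε) (x y : ℝ) :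
    ∫ z in Ici x, Gker ε z y = 1 - boundaryDefect ε y x := by
  simp only [Gker]
  rw [integral_sub ((integrable_pker hε.le).comp_sub_right y).integrableOn
      ((integrable_pker hε.le).comp_add_right y).integrableOn,
    integral_Ici_pker_sub, integral_Ici_pker_add, boundaryDefect, ← neg_sub y x, pkerTail_neg hε]
  ring

lemma measurable_boundaryDefect {ε : ℝ} (hε : 0 ≤ ε) (y : ℝ) : Measurable (boundaryDefect ε y) := by
  have := (pkerTail_antitone hε).measurable
  unfold boundaryDefect
  fun_prop

lemma boundaryDefect_nonneg (ε y x : ℝ) : 0 ≤ boundaryDefect ε y x :=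
  add_nonneg (pkerTail_nonneg ε _) (pkerTail_nonneg ε _)

lemma boundaryDefect_le_one {ε y : ℝ} (hε : 0 < ε) (hy : 0 ≤ y) (x : ℝ) :
    boundaryDefect ε y x ≤ 1 := by
  have h := pkerTail_antitone hε.le (show x - y ≤ x + y by linarith)
  rw [← neg_sub y x, pkerTail_neg hε] at h
  unfold boundaryDefect
  linarith

lemma boundaryDefect_le_exp {ε x y : ℝ} (hε : 0 < ε) (hx : 0 ≤ x) (hxy : x ≤ y / 2) :
    boundaryDefect ε y x ≤ Real.exp (-(y ^ 2) / (8 * ε)) := by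
  have hmono := pkerTail_antitone hε.le
  unfold boundaryDefect
  linarith [pkerTail_half_le hε (by linarith : 0 ≤ y), hmono (show y / 2 ≤ y - x by linarith),
    hmono (show y / 2 ≤ x + y by linarith)]

lemma integrable_pker_mul_boundaryDefect {ε y : ℝ} (hε : 0 < ε) (hy : 0 ≤ y) :
    Integrable (fun x => pker ε x * boundaryDefect ε y x) :=
  (integrable_pker hε.le).mul_bdd (measurable_boundaryDefect hε.le y).aestronglyMeasurable
    (c := 1) (Eventually.of_forall fun x => by
      rw [Real.norm_eq_abs, abs_of_nonneg (boundaryDefect_nonneg ε y x)]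
      exact boundaryDefect_le_one hε hy x)

lemma setIntegral_Ioi_pker_mul_boundaryDefect_le {ε y : ℝ} (hε : 0 < ε) (hy : 0 ≤ y) :
    ∫ x in Ioi 0, pker ε x * boundaryDefect ε y x ≤ Real.exp (-(y ^ 2) / (8 * ε)) := by
  have hsmall : ∀ᵐ x ∂volume.restrict (Ioi 0), x ∉ Ioi (y / 2) →
      boundaryDefect ε y x ≤ Real.exp (-(y ^ 2) / (8 * ε)) :=
    ae_restrict_of_forall_mem measurableSet_Ioi fun x hx hxy =>
      boundaryDefect_le_exp hε (le_of_lt hx) (not_lt.1 hxy)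
  have h := integral_mul_le_of_le_off (integrable_pker hε.le).integrableOn
    (Eventually.of_forall (pker_nonneg ε)) (measurable_boundaryDefect hε.le y).aestronglyMeasurable
    (Eventually.of_forall (boundaryDefect_nonneg ε y)) (Eventually.of_forall
    (boundaryDefect_le_one hε hy)) hsmall measurableSet_Ioi (Real.exp_pos _).le
  rw [Measure.restrict_restrict measurableSet_Ioi, Ioi_inter_Ioi,
    sup_eq_left.2 (by linarith : 0 ≤ y / 2), setIntegral_Ioi_pker, setIntegral_Ioi_pker,
    pkerTail_zero hε] at h
  linarith [pkerTail_half_le hε hy]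

lemma abs_setIntegral_pker_mul_integral_Gker_sub_half_le {ε y : ℝ} (hε : 0 < ε) (hy : 0 ≤ y) :
    |(∫ x in Ioi 0, pker ε x * ∫ z in Ici x, Gker ε z y) - 1 / 2|
      ≤ Real.exp (-(y ^ 2) / (8 * ε)) := by
  have hsplit : ∫ x in Ioi 0, pker ε x * ∫ z in Ici x, Gker ε z y
      = 1 / 2 - ∫ x in Ioi 0, pker ε x * boundaryDefect ε y x := by
    simp_rw [integral_Ici_Gker hε, mul_sub, mul_one]
    rw [integral_sub (integrable_pker hε.le).integrableOn
      (integrable_pker_mul_boundaryDefect hε hy).integrableOn, setIntegral_Ioi_pker,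
      pkerTail_zero hε]
  rw [hsplit, sub_sub_cancel_left, abs_neg, abs_of_nonneg (integral_nonneg fun x =>
    mul_nonneg (pker_nonneg ε x) (boundaryDefect_nonneg ε y x))]
  exact setIntegral_Ioi_pker_mul_boundaryDefect_le hε hy

/-- Lemma 5.6 (boundary term, quantitative core): for all `y > 0` and `ε > 0`,
`|∫₀^∞ p_ε(x) (∫_x^∞ G_ε(z,y) dz) dx - 1/2| ≤ 3 e^{-y²/(16ε)}`; in particular,
for every `y > 0` the integral tends to `1/2` as `ε ↓ 0`. -/
theorem boundary_term_quantitative :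
    (∀ y > (0 : ℝ), ∀ ε > (0 : ℝ),
      |(∫ x in Ioi (0 : ℝ), pker ε x * ∫ z in Ici x, Gker ε z y) - 1 / 2|
        ≤ 3 * Real.exp (-(y ^ 2) / (16 * ε))) ∧
    (∀ y > (0 : ℝ),
      Tendsto (fun ε => ∫ x in Ioi (0 : ℝ), pker ε x * ∫ z in Ici x, Gker ε z y)
        (𝓝[>] (0 : ℝ)) (𝓝 (1 / 2))) := by
  refine ⟨fun y hy ε hε => ?_, fun y hy => ?_⟩
  · have h8_le_16 : Real.exp (-(y ^ 2) / (8 * ε)) ≤ Real.exp (-(y ^ 2) / (16 * ε)) := by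
      rw [Real.exp_le_exp, neg_div, neg_div, neg_le_neg_iff]
      gcongr
      norm_num
    linarith [abs_setIntegral_pker_mul_integral_Gker_sub_half_le hε hy.le,
      Real.exp_pos (-(y ^ 2) / (16 * ε))]
  · rw [tendsto_iff_norm_sub_tendsto_zero]
    refine squeeze_zero' (Eventually.of_forall fun _ => norm_nonneg _) ?_
      (tendsto_exp_neg_div_mul_nhdsGT_zero (pow_pos hy 2) (by norm_num : (0 : ℝ) < 8))
    filter_upwards [self_mem_nhdsWithin] with ε hε
    exact abs_setIntegral_pker_mul_integral_Gker_sub_half_le hε hy.le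
end

section
/- Absolute continuity of the moving boundary (equation (6.5)): Let d̄ > 0, let ϱ : ℝ → ℝ be nondecreasing and right-continuous with Lebesgue–Stieltjes measure μ_ϱ, and let I : ℝ → ℝ be a bounded, nondecreasing, right-continuous function with I(s) = 0 for all s ≤ 0. Then for every t ≥ 0, ∫₀^{d̄} ϱ(r) I(t−r) dr = ϱ(0) ∫₀^t I(s) ds − ϱ(d̄) ∫₀^t I(s−d̄) ds + ∫₀^t (∫_{(0,d̄]} I(s−r) dμ_ϱ(r)) ds; in particular, t ↦ ∫_{t−d̄}^t ϱ(t−s) I(s) ds is absolutely continuous on [0,∞). -/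
open MeasureTheory Set

/-!
Writing `ϱ r = ϱ 0 + μ_ϱ (0, r]` and exchanging the order of integration turns
`∫₀^d̄ ϱ(r) I(t-r) dr` into `ϱ(0) (G t - G (t-d̄)) + ∫_{(0,d̄]} (G(t-u) - G(t-d̄)) dμ_ϱ(u)`,
where `G x = ∫₀^x I`. As `I` vanishes on `(-∞, 0]`, `∫₀^t I(s-u) ds = G(t-u)` for `u ≥ 0`, so by
Fubini the last term of the identity is `∫_{(0,d̄]} G(t-u) dμ_ϱ(u)` too. The density
`ϱ(0) I - ϱ(d̄) I(· - d̄) + ∫_{(0,d̄]} I(· - r) dμ_ϱ(r)` is a combination of monotone functions,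
hence locally integrable.
-/

namespace StieltjesFunction

theorem measureReal_Ioc (ϱ : StieltjesFunction ℝ) {a b : ℝ} (hab : a ≤ b) :
    ϱ.measure.real (Ioc a b) = ϱ b - ϱ a := by
  rw [measureReal_def, ϱ.measure_Ioc, ENNReal.toReal_ofReal (sub_nonneg.2 (ϱ.mono hab))]

instance isFiniteMeasure_restrict_Ioc (ϱ : StieltjesFunction ℝ) (a b : ℝ) :
    IsFiniteMeasure (ϱ.measure.restrict (Ioc a b)) :=
  isFiniteMeasure_restrict.2 measure_Ioc_lt_top.ne

theorem setIntegral_Ioc_mul (ϱ : StieltjesFunction ℝ) {a b : ℝ} {f : ℝ → ℝ}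
    (hf : IntegrableOn f (Ioc a b)) :
    ∫ r in Ioc a b, ϱ r * f r
      = ϱ a * (∫ r in Ioc a b, f r) + ∫ u in Ioc a b, (∫ r in u..b, f r) ∂ϱ.measure := by
  set F : ℝ → ℝ → ℝ := fun r u => (Iic r).indicator (fun _ => f r) u
  have hF : Integrable (Function.uncurry F)
      ((volume.restrict (Ioc a b)).prod (ϱ.measure.restrict (Ioc a b))) :=
    (hf.comp_fst _).indicator (s := {p : ℝ × ℝ | p.2 ≤ p.1})
      (measurableSet_le measurable_snd measurable_fst)
  have inner_u : ∀ r ∈ Ioc a b, ∫ u in Ioc a b, F r u ∂ϱ.measure = (ϱ r - ϱ a) * f r := by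
    intro r hr
    rw [setIntegral_indicator measurableSet_Iic, setIntegral_const, smul_eq_mul,
      Ioc_inter_Iic, min_eq_right hr.2, ϱ.measureReal_Ioc hr.1.le]
  have inner_r : ∀ u ∈ Ioc a b, ∫ r in Ioc a b, F r u = ∫ r in u..b, f r := by
    intro u hu
    have hIcc : Ioc a b ∩ Ici u = Icc u b := by
      ext r
      simp only [mem_inter_iff, mem_Ioc, mem_Ici, mem_Icc]
      exact ⟨fun ⟨⟨_, hrb⟩, hur⟩ => ⟨hur, hrb⟩, fun ⟨hur, hrb⟩ => ⟨⟨hu.1.trans_le hur, hrb⟩, hur⟩⟩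
    have hF_eq : ∀ r, F r u = (Ici u).indicator f r := fun r => by
      simp only [F, indicator_apply, mem_Iic, mem_Ici]
    simp only [hF_eq]
    rw [setIntegral_indicator measurableSet_Ici, hIcc, integral_Icc_eq_integral_Ioc,
      intervalIntegral.integral_of_le hu.2]
  calc ∫ r in Ioc a b, ϱ r * f r
      = ∫ r in Ioc a b, (ϱ a * f r + ∫ u in Ioc a b, F r u ∂ϱ.measure) := by
        refine setIntegral_congr_fun measurableSet_Ioc fun r hr => ?_
        rw [inner_u r hr]; ring
    _ = ϱ a * (∫ r in Ioc a b, f r) + ∫ r in Ioc a b, ∫ u in Ioc a b, F r u ∂ϱ.measure := by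
        rw [integral_add (hf.const_mul _) (g := fun r => ∫ u in Ioc a b, F r u ∂ϱ.measure)
          hF.integral_prod_left, integral_const_mul]
    _ = ϱ a * (∫ r in Ioc a b, f r) + ∫ u in Ioc a b, (∫ r in u..b, f r) ∂ϱ.measure := by
        rw [integral_integral_swap hF, setIntegral_congr_fun measurableSet_Ioc inner_r]

end StieltjesFunction

theorem intervalIntegral.integral_comp_sub_right_of_eq_zero_of_nonpos {I : ℝ → ℝ}
    (hI0 : ∀ s ≤ (0 : ℝ), I s = 0) {c t : ℝ} (hc : 0 ≤ c)
    (hI : IntervalIntegrable I volume 0 (t - c)) :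
    ∫ s in 0..t, I (s - c) = ∫ s in 0..t - c, I s := by
  have hzero : EqOn I 0 (uIcc (0 - c) 0) := fun s hs => by
    rw [uIcc_of_le (by linarith)] at hs
    exact hI0 s hs.2
  rw [intervalIntegral.integral_comp_sub_right,
    ← intervalIntegral.integral_add_adjacent_intervals
      ((intervalIntegrable_congr (hzero.mono uIoc_subset_uIcc)).2 intervalIntegrable_const) hI,
    intervalIntegral.integral_congr hzero]
  simp

theorem Monotone.integrable_comp_sub_prod {I : ℝ → ℝ} (hI : Monotone I) (μ ν : Measure ℝ)
    [IsLocallyFiniteMeasure μ] [IsLocallyFiniteMeasure ν] (a b c d : ℝ) :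
    Integrable (fun p : ℝ × ℝ => I (p.1 - p.2))
      ((μ.restrict (Ioc a b)).prod (ν.restrict (Ioc c d))) := by
  rw [Measure.prod_restrict]
  refine Measure.integrableOn_of_bounded (M := |I (a - d)| + |I (b - c)|) ?_
    (hI.measurable.comp (measurable_fst.sub measurable_snd)).aestronglyMeasurable
    (ae_restrict_of_forall_mem (measurableSet_Ioc.prod measurableSet_Ioc) fun p hp => ?_)
  · rw [Measure.prod_prod]
    exact ENNReal.mul_ne_top measure_Ioc_lt_top.ne measure_Ioc_lt_top.ne
  · obtain ⟨⟨ha, hb⟩, hc, hd⟩ := hp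
    have hlow : I (a - d) ≤ I (p.1 - p.2) := hI (by linarith)
    have hupp : I (p.1 - p.2) ≤ I (b - c) := hI (by linarith)
    rw [Real.norm_eq_abs, abs_le]
    constructor <;> linarith [neg_abs_le (I (a - d)), le_abs_self (I (b - c)),
      abs_nonneg (I (a - d)), abs_nonneg (I (b - c))]

theorem Monotone.monotone_setIntegral_comp_sub {I : ℝ → ℝ} (hI : Monotone I) (μ : Measure ℝ)
    [IsLocallyFiniteMeasure μ] (a b : ℝ) :
    Monotone fun s => ∫ r in Ioc a b, I (s - r) ∂μ := by
  have hint : ∀ s, IntegrableOn (fun r => I (s - r)) (Ioc a b) μ := fun s =>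
    ((hI.comp_antitone fun _ _ h => sub_le_sub_left h s).locallyIntegrable.integrableOn_isCompact
      isCompact_Icc).mono_set Ioc_subset_Icc_self
  exact fun s s' h => integral_mono (hint s) (hint s') fun r => hI (sub_le_sub_right h r)

theorem StieltjesFunction.intervalIntegral_mul_comp_sub (ϱ : StieltjesFunction ℝ) {I : ℝ → ℝ}
    (hI : Monotone I) (hI0 : ∀ s ≤ (0 : ℝ), I s = 0) {d t : ℝ} (hd : 0 ≤ d) (ht : 0 ≤ t) :
    (∫ r in (0 : ℝ)..d, ϱ r * I (t - r))
      = ϱ 0 * (∫ s in (0 : ℝ)..t, I s) - ϱ d * (∫ s in (0 : ℝ)..t, I (s - d))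
        + ∫ s in (0 : ℝ)..t, (∫ r in Ioc (0 : ℝ) d, I (s - r) ∂ϱ.measure) := by
  set G : ℝ → ℝ := fun x => ∫ s in (0 : ℝ)..x, I s
  have hI_int : ∀ a b, IntervalIntegrable I volume a b := fun _ _ => hI.intervalIntegrable
  have hG_sub : ∀ x y, ∫ s in x..y, I s = G y - G x := fun x y =>
    (intervalIntegral.integral_interval_sub_left (hI_int 0 y) (hI_int 0 x)).symm
  have hG_shift : ∀ u, 0 ≤ u → ∫ s in (0 : ℝ)..t, I (s - u) = G (t - u) := fun u hu =>
    intervalIntegral.integral_comp_sub_right_of_eq_zero_of_nonpos hI0 hu (hI_int _ _)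
  have hG_int : IntegrableOn (fun u => G (t - u)) (Ioc 0 d) ϱ.measure :=
    (((intervalIntegral.continuous_primitive hI_int 0).comp
      (continuous_const.sub continuous_id)).integrableOn_Icc).mono_set Ioc_subset_Icc_self
  have hI_refl : ∀ a b, ∫ r in a..b, I (t - r) = G (t - a) - G (t - b) := fun a b => by
    rw [intervalIntegral.integral_comp_sub_left, hG_sub]
  have lhs : ∫ r in (0 : ℝ)..d, ϱ r * I (t - r)
      = ϱ 0 * (G t - G (t - d)) + ∫ u in Ioc 0 d, (G (t - u) - G (t - d)) ∂ϱ.measure := by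
    rw [intervalIntegral.integral_of_le hd, ϱ.setIntegral_Ioc_mul (f := fun r => I (t - r))
      (hI.comp_antitone fun _ _ h => sub_le_sub_left h t).intervalIntegrable.1,
      ← intervalIntegral.integral_of_le hd, hI_refl, sub_zero]
    congr 1
    exact setIntegral_congr_fun measurableSet_Ioc fun u _ => by rw [hI_refl]
  have third : ∫ s in (0 : ℝ)..t, (∫ r in Ioc (0 : ℝ) d, I (s - r) ∂ϱ.measure)
      = ∫ u in Ioc 0 d, G (t - u) ∂ϱ.measure := by
    rw [intervalIntegral.integral_of_le ht, integral_integral_swap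
      (hI.integrable_comp_sub_prod volume ϱ.measure 0 t 0 d)]
    refine setIntegral_congr_fun measurableSet_Ioc fun u hu => ?_
    rw [← intervalIntegral.integral_of_le ht, hG_shift u hu.1.le]
  rw [lhs, third, hG_shift d hd, integral_sub hG_int (integrable_const _), setIntegral_const,
    smul_eq_mul, ϱ.measureReal_Ioc hd]
  ring

theorem moving_boundary_absolutely_continuous_general
    (dbar : ℝ) (hdbar : 0 < dbar) (ϱ : StieltjesFunction ℝ) (I : ℝ → ℝ)
    (hImono : Monotone I)
    (hI0 : ∀ s ≤ (0 : ℝ), I s = 0) :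
    (∀ t ≥ (0 : ℝ),
      (∫ r in (0 : ℝ)..dbar, ϱ r * I (t - r))
        = ϱ 0 * (∫ s in (0 : ℝ)..t, I s) - ϱ dbar * (∫ s in (0 : ℝ)..t, I (s - dbar))
          + ∫ s in (0 : ℝ)..t, (∫ r in Ioc (0 : ℝ) dbar, I (s - r) ∂ϱ.measure)) ∧
    ∃ D : ℝ → ℝ, (∀ T > (0 : ℝ), IntegrableOn D (Icc 0 T)) ∧
      ∀ t ≥ (0 : ℝ),
        (∫ s in (t - dbar)..t, ϱ (t - s) * I s) = ∫ s in (0 : ℝ)..t, D s := by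
  have identity (t : ℝ) (ht : 0 ≤ t) := ϱ.intervalIntegral_mul_comp_sub hImono hI0 hdbar.le ht
  set h : ℝ → ℝ := fun s => ∫ r in Ioc (0 : ℝ) dbar, I (s - r) ∂ϱ.measure
  have hI_int (a b : ℝ) : IntervalIntegrable (fun s => ϱ 0 * I s) volume a b :=
    hImono.intervalIntegrable.const_mul _
  have hI_shift_int (a b : ℝ) : IntervalIntegrable (fun s => ϱ dbar * I (s - dbar)) volume a b :=
    (hImono.comp fun _ _ h => sub_le_sub_right h dbar).intervalIntegrable.const_mul _
  have hh_int (a b : ℝ) : IntervalIntegrable h volume a b :=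
    (hImono.monotone_setIntegral_comp_sub ϱ.measure 0 dbar).intervalIntegrable
  refine ⟨identity, fun s => ϱ 0 * I s - ϱ dbar * I (s - dbar) + h s, fun T hT => ?_,
    fun t ht => ?_⟩
  · exact (intervalIntegrable_iff_integrableOn_Icc_of_le hT.le).1
      (((hI_int 0 T).sub (hI_shift_int 0 T)).add (hh_int 0 T))
  · rw [intervalIntegral.integral_add ((hI_int 0 t).sub (hI_shift_int 0 t)) (hh_int 0 t),
      intervalIntegral.integral_sub (hI_int 0 t) (hI_shift_int 0 t),
      intervalIntegral.integral_const_mul, intervalIntegral.integral_const_mul, ← identity t ht]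
    simpa using intervalIntegral.integral_comp_sub_left (fun r => ϱ r * I (t - r)) t
      (a := t - dbar) (b := t)

/-- Absolute continuity of the moving boundary (equation (6.5)): for `ϱ`
nondecreasing right-continuous (a Stieltjes function) and `I` bounded,
nondecreasing, right-continuous with `I ≡ 0` on `(-∞,0]`, one has, for `t ≥ 0`,
`∫₀^{d̄} ϱ(r) I(t-r) dr
  = ϱ(0) ∫₀^t I(s) ds - ϱ(d̄) ∫₀^t I(s-d̄) ds + ∫₀^t (∫_{(0,d̄]} I(s-r) dμ_ϱ(r)) ds`;
in particular `t ↦ ∫_{t-d̄}^t ϱ(t-s) I(s) ds` is absolutely continuous on `[0,∞)`. -/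
theorem moving_boundary_absolutely_continuous
    (dbar : ℝ) (hdbar : 0 < dbar) (ϱ : StieltjesFunction ℝ) (I : ℝ → ℝ)
    (hIbdd : ∃ M, ∀ s, |I s| ≤ M) (hImono : Monotone I)
    (hIrc : ∀ s, ContinuousWithinAt I (Ici s) s)
    (hI0 : ∀ s ≤ (0 : ℝ), I s = 0) :
    (∀ t ≥ (0 : ℝ),
      (∫ r in (0 : ℝ)..dbar, ϱ r * I (t - r))
        = ϱ 0 * (∫ s in (0 : ℝ)..t, I s) - ϱ dbar * (∫ s in (0 : ℝ)..t, I (s - dbar))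
          + ∫ s in (0 : ℝ)..t, (∫ r in Ioc (0 : ℝ) dbar, I (s - r) ∂ϱ.measure)) ∧
    ∃ D : ℝ → ℝ, (∀ T > (0 : ℝ), IntegrableOn D (Icc 0 T)) ∧
      ∀ t ≥ (0 : ℝ),
        (∫ s in (t - dbar)..t, ϱ (t - s) * I s) = ∫ s in (0 : ℝ)..t, D s :=
  moving_boundary_absolutely_continuous_general dbar hdbar ϱ I hImono hI0
end
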